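/- arXiv:1112.0813 — 6 statements merged into one kernel-verified Lean document; each statement's English description precedes it below -/
import Mathlib

section
/- Let g : ℝ → ℝ be continuously differentiable with g' ∈ L²(ℝ). Define for ξ ≠ ξ̃ the difference quotient c(ξ, ξ̃) = (g(ξ) - g(ξ̃))/(ξ - ξ̃). Then for every ξ ∈ ℝ, the L² norm of c(ξ, ·) with respect to ξ̃ satisfies (∫_ℝ c(ξ, ξ̃)² dξ̃)^{1/2} ≤ 2 ‖g'‖_{L²}. -/
/-!
Writing the difference quotient as `∫₀¹ g'(ξ + s (t - ξ)) ds` and applying Cauchy–Schwarz with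
the weight `√s` gives `c(ξ, t)² ≤ 2 ∫₀¹ g'(ξ + s (t - ξ))² √s ds`, since `∫₀¹ s^(-1/2) ds = 2`.
Integrating in `t` and swapping the integrals, the substitution `t ↦ ξ + s (t - ξ)` contributes a
factor `1 / s`, so the `s`-integral is again `2 ‖g'‖²`, for a total of `4 ‖g'‖²`.
-/

open MeasureTheory Set
open scoped ENNReal

theorem lintegral_comp_mul_add (f : ℝ → ℝ≥0∞) {a : ℝ} (ha : a ≠ 0) (b : ℝ) :
    ∫⁻ x, f (a * x + b) = ENNReal.ofReal |a⁻¹| * ∫⁻ y, f y := by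
  rw [← (measurableEmbedding_mulLeft₀ ha).lintegral_map (fun y => f (y + b)),
    Real.map_volume_mul_left ha, lintegral_smul_measure, smul_eq_mul,
    lintegral_add_right_eq_self f b]

theorem lintegral_Ioc_zero_one_rpow {r : ℝ} (hr : -1 < r) :
    ∫⁻ x in Ioc 0 1, ENNReal.ofReal (x ^ r) = ENNReal.ofReal (r + 1)⁻¹ := by
  have hint : IntegrableOn (fun x : ℝ => x ^ r) (Ioc 0 1) :=
    (intervalIntegrable_iff_integrableOn_Ioc_of_le zero_le_one).mp
      (intervalIntegral.intervalIntegrable_rpow' hr)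
  rw [← ofReal_integral_eq_lintegral_ofReal hint
    (ae_restrict_of_forall_mem measurableSet_Ioc fun x hx => Real.rpow_nonneg hx.1.le r),
    ← intervalIntegral.integral_of_le zero_le_one, integral_rpow (Or.inl hr)]
  simp [Real.zero_rpow (by linarith : r + 1 ≠ 0)]

theorem ENNReal.sq_lintegral_le_of_mul_eq_one {α : Type*} [MeasurableSpace α] {μ : Measure α}
    {f w v : α → ℝ≥0∞} (hf : AEMeasurable f μ) (hw : AEMeasurable w μ) (hv : AEMeasurable v μ)
    (hwv : ∀ᵐ x ∂μ, w x * v x = 1) :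
    (∫⁻ x, f x ∂μ) ^ 2 ≤ (∫⁻ x, f x ^ 2 * w x ∂μ) * ∫⁻ x, v x ∂μ := by
  have hsplit : ∀ᵐ x ∂μ, f x = (f x ^ 2 * w x) ^ (1 / 2 : ℝ) * v x ^ (1 / 2 : ℝ) := by
    filter_upwards [hwv] with x hx
    rw [← ENNReal.mul_rpow_of_nonneg _ _ (by norm_num), mul_assoc, hx, mul_one,
      ← ENNReal.rpow_natCast, ← ENNReal.rpow_mul]
    norm_num
  have hCS := ENNReal.lintegral_mul_norm_pow_le (f := fun x => f x ^ 2 * w x)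
    ((hf.pow_const 2).mul hw) hv (p := 1 / 2) (q := 1 / 2) (by norm_num) (by norm_num) (by norm_num)
  rw [← lintegral_congr_ae hsplit, ← ENNReal.mul_rpow_of_nonneg _ _ (by norm_num)] at hCS
  calc (∫⁻ x, f x ∂μ) ^ 2 ≤ (((∫⁻ x, f x ^ 2 * w x ∂μ) * ∫⁻ x, v x ∂μ) ^ (1 / 2 : ℝ)) ^ 2 := by
        gcongr
    _ = _ := by
        rw [← ENNReal.rpow_natCast, ← ENNReal.rpow_mul]
        norm_num

section Slope

variable {E : Type*} [NormedAddCommGroup E] [NormedSpace ℝ E] [CompleteSpace E] {f : ℝ → E}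

theorem slope_eq_intervalIntegral_deriv (hf : ContDiff ℝ 1 f) {x y : ℝ} (hxy : x ≠ y) :
    slope f x y = ∫ s in (0 : ℝ)..1, deriv f (x + s * (y - x)) := by
  have hyx : y - x ≠ 0 := sub_ne_zero.2 hxy.symm
  have hf' : ∫ u in x..y, deriv f u = f y - f x :=
    intervalIntegral.integral_deriv_eq_sub
      (fun u _ => (hf.differentiable one_ne_zero).differentiableAt)
      ((hf.continuous_deriv le_rfl).intervalIntegrable x y)
  calc slope f x y = (y - x)⁻¹ • ∫ u in x..y, deriv f u := by rw [hf', slope_def_module]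
    _ = ∫ s in (0 : ℝ)..1, deriv f ((y - x) * s + x) := by
        rw [intervalIntegral.integral_comp_mul_add _ hyx]
        simp
    _ = ∫ s in (0 : ℝ)..1, deriv f (x + s * (y - x)) := by
        simp only [mul_comm, add_comm]

theorem enorm_slope_le_lintegral_enorm_deriv (hf : ContDiff ℝ 1 f) {x y : ℝ} (hxy : x ≠ y) :
    ‖slope f x y‖ₑ ≤ ∫⁻ s in Ioc 0 1, ‖deriv f (x + s * (y - x))‖ₑ := by
  rw [slope_eq_intervalIntegral_deriv hf hxy, intervalIntegral.integral_of_le zero_le_one]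
  exact enorm_integral_le_lintegral_enorm _

theorem lintegral_enorm_slope_sq_le (hf : ContDiff ℝ 1 f) (x : ℝ) :
    ∫⁻ y, ‖slope f x y‖ₑ ^ 2 ≤ 4 * ∫⁻ z, ‖deriv f z‖ₑ ^ 2 := by
  set I := ∫⁻ z, ‖deriv f z‖ₑ ^ 2
  set K : ℝ → ℝ → ℝ≥0∞ := fun y s => ‖deriv f (x + s * (y - x))‖ₑ
  set w : ℝ → ℝ≥0∞ := fun s => ENNReal.ofReal (s ^ (1 / 2 : ℝ))
  set v : ℝ → ℝ≥0∞ := fun s => ENNReal.ofReal (s ^ (-(1 / 2) : ℝ))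
  have hK : Measurable (Function.uncurry K) :=
    ((hf.continuous_deriv le_rfl).comp (by fun_prop)).enorm.measurable
  have hw : Measurable w := by fun_prop
  have hv : Measurable v := by fun_prop
  have hv_int : ∫⁻ s in Ioc 0 1, v s = 2 := by
    rw [lintegral_Ioc_zero_one_rpow (by norm_num)]
    norm_num
  have hwv : ∀ s ∈ Ioc (0 : ℝ) 1, w s * v s = 1 := fun s hs => by
    rw [← ENNReal.ofReal_mul (Real.rpow_nonneg hs.1.le _), ← Real.rpow_add hs.1]
    norm_num
  have hscale : ∀ s ∈ Ioc (0 : ℝ) 1, ∫⁻ y, K y s ^ 2 * w s = v s * I := fun s hs => by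
    have hK_affine : ∀ y, K y s = ‖deriv f (s * y + (1 - s) * x)‖ₑ := fun y => by
      simp only [K]; ring_nf
    rw [lintegral_mul_const' _ _ ENNReal.ofReal_ne_top]
    simp only [hK_affine]
    rw [lintegral_comp_mul_add (fun z => ‖deriv f z‖ₑ ^ 2) hs.1.ne', mul_comm, ← mul_assoc,
      abs_of_pos (inv_pos.2 hs.1), ← ENNReal.ofReal_mul (Real.rpow_nonneg hs.1.le _),
      ← Real.rpow_neg_one, ← Real.rpow_add hs.1]
    norm_num
    rfl
  have hpointwise : ∀ᵐ y, ‖slope f x y‖ₑ ^ 2 ≤ (∫⁻ s in Ioc 0 1, K y s ^ 2 * w s) * 2 := by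
    filter_upwards [Measure.ae_ne volume x] with y hy
    rw [← hv_int]
    calc ‖slope f x y‖ₑ ^ 2 ≤ (∫⁻ s in Ioc 0 1, K y s) ^ 2 := by
          gcongr; exact enorm_slope_le_lintegral_enorm_deriv hf hy.symm
      _ ≤ _ := ENNReal.sq_lintegral_le_of_mul_eq_one
            (hK.comp measurable_prodMk_left : Measurable (K y)).aemeasurable
            hw.aemeasurable hv.aemeasurable
            ((ae_restrict_iff' measurableSet_Ioc).2 (ae_of_all _ hwv))
  calc ∫⁻ y, ‖slope f x y‖ₑ ^ 2
      ≤ ∫⁻ y, (∫⁻ s in Ioc 0 1, K y s ^ 2 * w s) * 2 := lintegral_mono_ae hpointwise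
    _ = (∫⁻ s in Ioc 0 1, ∫⁻ y, K y s ^ 2 * w s) * 2 := by
        rw [lintegral_mul_const' _ _ ENNReal.ofNat_ne_top,
          lintegral_lintegral_swap ((hK.pow_const 2).mul (hw.comp measurable_snd)).aemeasurable]
    _ = (∫⁻ s in Ioc 0 1, v s * I) * 2 := by
        rw [setLIntegral_congr_fun measurableSet_Ioc hscale]
    _ = 4 * I := by
        rw [lintegral_mul_const _ hv, hv_int]
        ring

end Slope

theorem integral_sq_eq_toReal_lintegral_enorm_sq {α : Type*} [MeasurableSpace α] {μ : Measure α}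
    {f : α → ℝ} (hf : AEStronglyMeasurable f μ) :
    ∫ x, f x ^ 2 ∂μ = (∫⁻ x, ‖f x‖ₑ ^ 2 ∂μ).toReal := by
  simpa [enorm_pow] using integral_norm_eq_lintegral_enorm (hf.pow 2)

theorem diff_quotient_L2_bound
    (g : ℝ → ℝ) (hg : ContDiff ℝ 1 g)
    (hg' : Integrable (fun z => (deriv g z) ^ 2)) :
    ∀ ξ : ℝ,
      Real.sqrt (∫ t : ℝ, ((g ξ - g t) / (ξ - t)) ^ 2) ≤
        2 * Real.sqrt (∫ z : ℝ, (deriv g z) ^ 2) := by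
  intro ξ
  have hquot : ∀ t, (g ξ - g t) / (ξ - t) = slope g ξ t := fun t => by
    rw [slope_comm, slope_def_field]
  have hslope_meas : AEStronglyMeasurable (slope g ξ) volume := by
    have hg_meas : Measurable g := hg.continuous.measurable
    rw [show slope g ξ = fun t => (t - ξ)⁻¹ • (g t - g ξ) from funext (slope_def_module g ξ)]
    fun_prop
  have hderiv_fin : ∫⁻ z, ‖deriv g z‖ₑ ^ 2 ≠ ⊤ := by
    simpa [enorm_pow] using hg'.2.ne
  have hL2 : ∫ t, slope g ξ t ^ 2 ≤ 4 * ∫ z, deriv g z ^ 2 := by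
    rw [integral_sq_eq_toReal_lintegral_enorm_sq hslope_meas,
      integral_sq_eq_toReal_lintegral_enorm_sq (hg.continuous_deriv le_rfl).aestronglyMeasurable,
      ← ENNReal.toReal_ofNat 4, ← ENNReal.toReal_mul]
    exact ENNReal.toReal_mono (ENNReal.mul_ne_top ENNReal.ofNat_ne_top hderiv_fin)
      (lintegral_enorm_slope_sq_le hg ξ)
  simp only [hquot]
  calc √(∫ t, slope g ξ t ^ 2) ≤ √(4 * ∫ z, deriv g z ^ 2) := Real.sqrt_le_sqrt hL2
    _ = 2 * √(∫ z, deriv g z ^ 2) := by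
        rw [show (4 : ℝ) = 2 ^ 2 by norm_num, Real.sqrt_mul (by positivity),
          Real.sqrt_sq zero_le_two]
end

section
/- Let g : ℝ → ℝ be twice continuously differentiable with g'' ∈ L²(ℝ). Define c(ξ, ξ̃) = (g(ξ) - g(ξ̃))/(ξ - ξ̃) and let c_ξ denote its partial derivative with respect to ξ, which equals (g'(ξ)·(ξ-ξ̃) - (g(ξ)-g(ξ̃)))/(ξ-ξ̃)². Then for every ξ ∈ ℝ, (∫_ℝ c_ξ(ξ, ξ̃)² dξ̃)^{1/2} ≤ (4/3) ‖g''‖_{L²}. -/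
/-!
For `t ≠ ξ`, Taylor's formula with integral remainder gives
`c_ξ(ξ, t) = ∫₀¹ (1 - r) g''(ξ + r (t - ξ)) dr`. Cauchy–Schwarz, splitting `1 - r` as
`√((1 - r) / √r) · √((1 - r) √r)`, bounds `c_ξ(ξ, t)²` by
`(4/3) ∫₀¹ (1 - r) √r g''(ξ + r (t - ξ))² dr`, since `∫₀¹ (1 - r) / √r dr = 4/3`.
Integrating in `t` and exchanging the integrals, the substitution `z = ξ + r (t - ξ)` turns the
inner integral into `‖g''‖² / r`, and the remaining `r`-integral is again `4/3`.
Working with lower Lebesgue integrals makes the exchange free of integrability side conditions.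
-/

open MeasureTheory Set
open scoped ENNReal

theorem ContDiff.eq_add_deriv_mul_add_integral {g : ℝ → ℝ} (hg : ContDiff ℝ 2 g) (ξ y : ℝ) :
    g (ξ + y) = g ξ + deriv g ξ * y +
      y ^ 2 * ∫ r in (0:ℝ)..1, (1 - r) * deriv (deriv g) (ξ + r * y) := by
  rw [← intervalIntegral.integral_const_mul]
  simpa [Finset.sum_range_succ, iteratedFDeriv_apply_eq_iteratedDeriv_mul_prod, iteratedDeriv_succ,
    mul_comm, mul_assoc, mul_left_comm] using
    map_add_eq_sum_add_integral_iteratedFDeriv (n := 1) (x := ξ) (y := y) fun _ _ => hg.contDiffAt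

theorem ContDiff.slope_deriv_eq_integral {g : ℝ → ℝ} (hg : ContDiff ℝ 2 g) {ξ t : ℝ}
    (ht : t ≠ ξ) :
    (deriv g ξ * (ξ - t) - (g ξ - g t)) / (ξ - t) ^ 2 =
      ∫ r in Ioc (0:ℝ) 1, (1 - r) * deriv (deriv g) (ξ + r * (t - ξ)) := by
  have taylor := hg.eq_add_deriv_mul_add_integral ξ (t - ξ)
  rw [add_sub_cancel] at taylor
  rw [← intervalIntegral.integral_of_le zero_le_one,
    div_eq_iff (pow_ne_zero 2 (sub_ne_zero.2 ht.symm)), taylor]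
  ring

theorem ContDiff.continuous_deriv_deriv {g : ℝ → ℝ} (hg : ContDiff ℝ 2 g) :
    Continuous (deriv (deriv g)) := by
  simpa [iteratedDeriv_succ] using hg.continuous_iteratedDeriv 2 le_rfl

theorem integral_one_sub_div_sqrt : ∫ r in (0:ℝ)..1, (1 - r) / √r = 4 / 3 := by
  have split : EqOn (fun r : ℝ => (1 - r) / √r)
      (fun r => r ^ (-(1 / 2) : ℝ) - r ^ (1 / 2 : ℝ)) (uIcc 0 1) := by
    intro r hr
    rw [uIcc_of_le zero_le_one] at hr
    rcases hr.1.eq_or_lt with rfl | hr0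
    · simp
    · dsimp only
      rw [Real.sqrt_eq_rpow, sub_div, one_div, ← Real.rpow_neg hr0.le]
      congr 1
      rw [div_eq_iff (by positivity), ← Real.rpow_add hr0]
      norm_num
  rw [intervalIntegral.integral_congr split,
    intervalIntegral.integral_sub (intervalIntegral.intervalIntegrable_rpow' (by norm_num))
      (intervalIntegral.intervalIntegrable_rpow' (by norm_num)),
    integral_rpow (Or.inl (by norm_num)), integral_rpow (Or.inl (by norm_num))]
  norm_num

theorem lintegral_one_sub_div_sqrt :
    ∫⁻ r in Ioc (0:ℝ) 1, ENNReal.ofReal ((1 - r) / √r) = ENNReal.ofReal (4 / 3) := by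
  have h : ∫ r in Ioc (0:ℝ) 1, (1 - r) / √r = 4 / 3 := by
    rw [← intervalIntegral.integral_of_le zero_le_one, integral_one_sub_div_sqrt]
  rw [← h, ofReal_integral_eq_lintegral_ofReal (.of_integral_ne_zero (by rw [h]; norm_num))]
  exact ae_restrict_of_forall_mem measurableSet_Ioc fun r hr =>
    div_nonneg (sub_nonneg.2 hr.2) (Real.sqrt_nonneg r)

theorem enorm_integral_sq_le_lintegral_mul_lintegral {α E : Type*} [MeasurableSpace α]
    [NormedAddCommGroup E] [NormedSpace ℝ E] {μ : Measure α} {f : α → E} {a b : α → ℝ≥0∞}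
    (ha : AEMeasurable a μ) (hb : AEMeasurable b μ) (hfab : ∀ᵐ x ∂μ, ‖f x‖ₑ ^ 2 ≤ a x * b x) :
    ‖∫ x, f x ∂μ‖ₑ ^ 2 ≤ (∫⁻ x, a x ∂μ) * ∫⁻ x, b x ∂μ := by
  have half : (2⁻¹ : ℝ) = 1 / 2 := by norm_num
  rw [← ENNReal.rpow_two, ← ENNReal.le_rpow_inv_iff two_pos,
    ENNReal.mul_rpow_of_nonneg _ _ (by norm_num), half]
  calc ‖∫ x, f x ∂μ‖ₑ ≤ ∫⁻ x, ‖f x‖ₑ ∂μ := enorm_integral_le_lintegral_enorm f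
    _ ≤ ∫⁻ x, a x ^ (1 / 2 : ℝ) * b x ^ (1 / 2 : ℝ) ∂μ := by
      refine lintegral_mono_ae (hfab.mono fun x hx => ?_)
      rwa [← ENNReal.mul_rpow_of_nonneg _ _ (by norm_num), ← half,
        ENNReal.le_rpow_inv_iff two_pos, ENNReal.rpow_two]
    _ ≤ _ := ENNReal.lintegral_mul_norm_pow_le ha hb (by norm_num) (by norm_num) (by norm_num)

theorem lintegral_comp_mul_left (f : ℝ → ℝ≥0∞) {r : ℝ} (hr : r ≠ 0) :
    ∫⁻ t, f (r * t) = ENNReal.ofReal |r⁻¹| * ∫⁻ z, f z := by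
  have h := lintegral_map_equiv f (MeasurableEquiv.mulLeft₀ r hr) (μ := volume)
  change ∫⁻ z, f z ∂(Measure.map (r * ·) volume) = ∫⁻ t, f (r * t) at h
  rw [← h, Real.map_volume_mul_left hr, lintegral_smul_measure, smul_eq_mul]

theorem lintegral_comp_homothety (f : ℝ → ℝ≥0∞) (ξ : ℝ) {r : ℝ} (hr : r ≠ 0) :
    ∫⁻ t, f (ξ + r * (t - ξ)) = ENNReal.ofReal |r⁻¹| * ∫⁻ z, f z := by
  rw [lintegral_sub_right_eq_self (fun s => f (ξ + r * s)) ξ,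
    lintegral_comp_mul_left (fun s => f (ξ + s)) hr, lintegral_add_left_eq_self]

theorem integral_le_mul_integral_of_lintegral_le {α : Type*} [MeasurableSpace α]
    {μ : Measure α} {F H : α → ℝ} {C : ℝ} (hF : AEStronglyMeasurable F μ)
    (hF0 : ∀ᵐ x ∂μ, 0 ≤ F x) (hH : Integrable H μ) (hH0 : ∀ᵐ x ∂μ, 0 ≤ H x) (hC : 0 ≤ C)
    (hFH : ∫⁻ x, ENNReal.ofReal (F x) ∂μ ≤ ENNReal.ofReal C * ∫⁻ x, ENNReal.ofReal (H x) ∂μ) :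
    ∫ x, F x ∂μ ≤ C * ∫ x, H x ∂μ := by
  rw [integral_eq_lintegral_of_nonneg_ae hF0 hF, integral_eq_lintegral_of_nonneg_ae hH0 hH.1,
    ← ENNReal.toReal_ofReal hC, ← ENNReal.toReal_mul]
  exact ENNReal.toReal_mono (ENNReal.mul_ne_top ENNReal.ofReal_ne_top hH.lintegral_lt_top.ne) hFH

theorem ContDiff.ofReal_sq_slope_deriv_le {g : ℝ → ℝ} (hg : ContDiff ℝ 2 g) {ξ t : ℝ}
    (ht : t ≠ ξ) :
    ENNReal.ofReal (((deriv g ξ * (ξ - t) - (g ξ - g t)) / (ξ - t) ^ 2) ^ 2) ≤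
      ENNReal.ofReal (4 / 3) * ∫⁻ r in Ioc (0:ℝ) 1,
        ENNReal.ofReal ((1 - r) * √r * deriv (deriv g) (ξ + r * (t - ξ)) ^ 2) := by
  have hG := hg.continuous_deriv_deriv
  rw [hg.slope_deriv_eq_integral ht, ← lintegral_one_sub_div_sqrt,
    ← Real.enorm_of_nonneg (sq_nonneg _), enorm_pow]
  refine enorm_integral_sq_le_lintegral_mul_lintegral (by fun_prop) (by fun_prop) ?_
  refine ae_restrict_of_forall_mem measurableSet_Ioc fun r hr => le_of_eq ?_
  have hsqrt : 0 < √r := Real.sqrt_pos.2 hr.1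
  rw [← enorm_pow, Real.enorm_of_nonneg (sq_nonneg _),
    ← ENNReal.ofReal_mul (div_nonneg (sub_nonneg.2 hr.2) hsqrt.le)]
  congr 1
  field_simp

theorem ContDiff.lintegral_sq_slope_deriv_le {g : ℝ → ℝ} (hg : ContDiff ℝ 2 g) (ξ : ℝ) :
    ∫⁻ t, ENNReal.ofReal (((deriv g ξ * (ξ - t) - (g ξ - g t)) / (ξ - t) ^ 2) ^ 2) ≤
      ENNReal.ofReal ((4 / 3) ^ 2) * ∫⁻ z, ENNReal.ofReal (deriv (deriv g) z ^ 2) := by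
  set G := deriv (deriv g)
  have hG : Continuous G := hg.continuous_deriv_deriv
  have rescale : ∀ r ∈ Ioc (0:ℝ) 1,
      ∫⁻ t, ENNReal.ofReal ((1 - r) * √r * G (ξ + r * (t - ξ)) ^ 2) =
        ENNReal.ofReal ((1 - r) / √r) * ∫⁻ z, ENNReal.ofReal (G z ^ 2) := by
    intro r hr
    have hw : 0 ≤ (1 - r) * √r := mul_nonneg (sub_nonneg.2 hr.2) (Real.sqrt_nonneg r)
    simp_rw [ENNReal.ofReal_mul hw]
    rw [lintegral_const_mul' _ _ ENNReal.ofReal_ne_top,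
      lintegral_comp_homothety (fun z => ENNReal.ofReal (G z ^ 2)) ξ hr.1.ne', ← mul_assoc,
      ← ENNReal.ofReal_mul hw, abs_of_pos (inv_pos.2 hr.1)]
    congr 2
    have hsqrt : 0 < √r := Real.sqrt_pos.2 hr.1
    field_simp
    rw [Real.sq_sqrt hr.1.le, mul_div_cancel_right₀ _ hr.1.ne']
  calc ∫⁻ t, ENNReal.ofReal (((deriv g ξ * (ξ - t) - (g ξ - g t)) / (ξ - t) ^ 2) ^ 2)
      ≤ ∫⁻ t, ENNReal.ofReal (4 / 3) *
          ∫⁻ r in Ioc (0:ℝ) 1, ENNReal.ofReal ((1 - r) * √r * G (ξ + r * (t - ξ)) ^ 2) :=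
        lintegral_mono_ae ((volume.ae_ne ξ).mono fun t ht => hg.ofReal_sq_slope_deriv_le ht)
    _ = ENNReal.ofReal (4 / 3) *
          ∫⁻ r in Ioc (0:ℝ) 1, ∫⁻ t, ENNReal.ofReal ((1 - r) * √r * G (ξ + r * (t - ξ)) ^ 2) := by
      rw [lintegral_const_mul' _ _ ENNReal.ofReal_ne_top, lintegral_lintegral_swap]
      exact Measurable.aemeasurable (by fun_prop)
    _ = ENNReal.ofReal ((4 / 3) ^ 2) * ∫⁻ z, ENNReal.ofReal (G z ^ 2) := by
      rw [setLIntegral_congr_fun measurableSet_Ioc rescale, lintegral_mul_const _ (by fun_prop),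
        lintegral_one_sub_div_sqrt, ← mul_assoc, ← ENNReal.ofReal_mul (by norm_num), sq]

theorem diff_quotient_deriv_L2_bound
    (g : ℝ → ℝ) (hg : ContDiff ℝ 2 g)
    (hg'' : Integrable (fun z => (deriv (deriv g) z) ^ 2)) :
    ∀ ξ : ℝ,
      Real.sqrt (∫ t : ℝ,
          ((deriv g ξ * (ξ - t) - (g ξ - g t)) / (ξ - t) ^ 2) ^ 2) ≤
        (4 / 3) * Real.sqrt (∫ z : ℝ, (deriv (deriv g) z) ^ 2) := by
  intro ξ
  have hc : Measurable fun t => ((deriv g ξ * (ξ - t) - (g ξ - g t)) / (ξ - t) ^ 2) ^ 2 := by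
    have hg_meas := hg.continuous.measurable
    fun_prop
  have bound := integral_le_mul_integral_of_lintegral_le hc.aestronglyMeasurable
    (.of_forall fun _ => sq_nonneg _) hg'' (.of_forall fun _ => sq_nonneg _) (by positivity)
    (hg.lintegral_sq_slope_deriv_le ξ)
  calc _ ≤ √((4 / 3) ^ 2 * ∫ z, deriv (deriv g) z ^ 2) := Real.sqrt_le_sqrt bound
    _ = _ := by rw [Real.sqrt_mul (by positivity), Real.sqrt_sq (by positivity)]
end

section
/- Let h₀ : ℝ → ℝ be continuously differentiable, vanishing at infinity, with ‖ε h₀'‖_{L∞} < 1. Then there exists a unique continuous function g₀ : ℝ → ℝ vanishing at infinity such that h₀(ξ - ε g₀(ξ)) = g₀(ξ) for all ξ ∈ ℝ. -/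
/-!
The map `g ↦ h₀ (· - ε g)` sends `C₀(ℝ, ℝ)` to itself, since a bounded perturbation of the
identity still tends to infinity. It is a `K`-contraction in the sup metric: for fixed `ξ`, the
derivative of `t ↦ h₀ (ξ - ε t)` is `-ε h₀' (ξ - ε t)`, bounded by `K < 1`. Banach's fixed point
theorem in the complete space `C₀(ℝ, ℝ)` gives existence and uniqueness.
-/

open Filter Bornology NNReal ZeroAtInfty

theorem tendsto_add_cobounded_of_norm_le {E : Type*} [SeminormedAddCommGroup E] {v : E → E}
    {C : ℝ} (hv : ∀ x, ‖v x‖ ≤ C) :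
    Tendsto (fun x => x + v x) (cobounded E) (cobounded E) := by
  rw [← tendsto_norm_atTop_iff_cobounded]
  refine tendsto_atTop_mono (fun x => ?_)
    (tendsto_atTop_add_const_right _ (-C) tendsto_norm_cobounded_atTop)
  simpa using (norm_sub_le (x + v x) (v x)).trans (add_le_add_right (hv x) _)

namespace ZeroAtInftyContinuousMap

variable {E F : Type*} [NormedAddCommGroup E] [NormedSpace ℝ E] [ProperSpace E]

def compSubSmul [TopologicalSpace F] [Zero F] (h : C₀(E, F)) (ε : ℝ) (g : C₀(E, E)) :
    C₀(E, F) where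
  toFun x := h (x - ε • g x)
  continuous_toFun := by fun_prop
  zero_at_infty' := by
    refine h.zero_at_infty'.comp ?_
    rw [← Metric.cobounded_eq_cocompact]
    simpa only [sub_eq_add_neg, ← neg_smul] using
      tendsto_add_cobounded_of_norm_le fun x => (norm_smul_le (-ε) (g x)).trans
        (mul_le_mul_of_nonneg_left (g.toBCF.norm_coe_le_norm x) (norm_nonneg _))

theorem lipschitzWith_compSubSmul [PseudoMetricSpace F] [Zero F] (h : C₀(E, F)) (ε : ℝ)
    {K : ℝ≥0} (hK : ∀ x, LipschitzWith K fun v : E => h (x - ε • v)) :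
    LipschitzWith K (h.compSubSmul ε) := by
  refine LipschitzWith.of_dist_le_mul fun g g' => ?_
  rw [← dist_toBCF_eq_dist, BoundedContinuousFunction.dist_le (by positivity)]
  intro x
  calc dist (h (x - ε • g x)) (h (x - ε • g' x)) ≤ K * dist (g x) (g' x) :=
        (hK x).dist_le_mul _ _
    _ ≤ K * dist g g' := by
      gcongr
      exact dist_toBCF_eq_dist (f := g) ▸ g.toBCF.dist_coe_le_dist (g := g'.toBCF) x

end ZeroAtInftyContinuousMap

theorem lipschitzWith_comp_sub_mul {f : ℝ → ℝ} (hf : Differentiable ℝ f) {ε : ℝ} {K : ℝ≥0}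
    (hbound : ∀ y, |ε * deriv f y| ≤ K) (x : ℝ) : LipschitzWith K fun t => f (x - ε * t) := by
  have hderiv : ∀ t, HasDerivAt (fun t => f (x - ε * t)) (deriv f (x - ε * t) * -ε) t := fun t =>
    (hf _).hasDerivAt.comp t (((hasDerivAt_id t).const_mul ε).const_sub x |>.congr_deriv (by ring))
  refine lipschitzWith_of_nnnorm_deriv_le (fun t => (hderiv t).differentiableAt) fun t => ?_
  rw [(hderiv t).deriv, ← NNReal.coe_le_coe, coe_nnnorm, Real.norm_eq_abs, mul_neg, abs_neg,
    mul_comm]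
  exact hbound _

theorem fixed_point_existence_uniqueness (ε : ℝ) (h₀ : ℝ → ℝ)
    (hC1 : ContDiff ℝ 1 h₀)
    (hvanish : Tendsto h₀ (cocompact ℝ) (nhds 0))
    (hsmall : ∃ K : ℝ, K < 1 ∧ ∀ x : ℝ, |ε * deriv h₀ x| ≤ K) :
    ∃! g₀ : ℝ → ℝ,
      Continuous g₀ ∧ Tendsto g₀ (cocompact ℝ) (nhds 0) ∧
      ∀ ξ : ℝ, h₀ (ξ - ε * g₀ ξ) = g₀ ξ := by
  obtain ⟨K, hK1, hbound⟩ := hsmall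
  have hK0 : 0 ≤ K := (abs_nonneg _).trans (hbound 0)
  let h : C₀(ℝ, ℝ) := ⟨⟨h₀, hC1.continuous⟩, hvanish⟩
  have hT : ContractingWith ⟨K, hK0⟩ (h.compSubSmul ε) :=
    ⟨by exact_mod_cast hK1, h.lipschitzWith_compSubSmul ε
      (lipschitzWith_comp_sub_mul (hC1.differentiable one_ne_zero) hbound)⟩
  refine ⟨hT.fixedPoint, ⟨map_continuous _, zero_at_infty _,
    congr_fun (congrArg (⇑) hT.fixedPoint_isFixedPt)⟩, ?_⟩
  rintro g ⟨hg_cont, hg_vanish, hg_fix⟩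
  exact congrArg (⇑) <|
    hT.fixedPoint_unique (x := ⟨⟨g, hg_cont⟩, hg_vanish⟩) (ZeroAtInftyContinuousMap.ext hg_fix)
end

section
/- Let g : ℝ → ℝ be C¹ and integrable with ‖ε g'‖_{L∞} ≤ 1/2, and define h(x) = g(ξ) via the change of variables x = ξ - ε g(ξ). Then ∫_ℝ h(x)² dx = ∫_ℝ g(ξ)² dξ. In particular ‖h‖_{L²} = ‖g‖_{L²}. -/
/-!
The substitution `x = ξ - ε g ξ` is a bijection of `ℝ` (the identity minus a `1/2`-contraction)
with derivative `1 - ε g' > 0`, so `∫ h² = ∫ (1 - ε g') g²`. The correction term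
`ε g' g² = (ε / 3) (g³)'` integrates to zero: `g` is integrable and Lipschitz, hence bounded,
so `g³` is integrable.
-/

open MeasureTheory NNReal

theorem LipschitzWith.bijective_id_sub {E : Type*} [NormedAddCommGroup E] [CompleteSpace E]
    {u : E → E} {c : ℝ≥0} (hu : LipschitzWith c u) (hc : c < 1) :
    Function.Bijective fun x => x - u x := by
  refine ⟨fun x y hxy => ?_, fun y => ?_⟩
  · have hle : dist x y ≤ c * dist x y :=
      calc dist x y = dist (u x) (u y) := by
            rw [dist_eq_norm, dist_eq_norm, sub_eq_sub_iff_sub_eq_sub.mp hxy]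
        _ ≤ c * dist x y := hu.dist_le_mul x y
    have hc' : (c : ℝ) < 1 := hc
    exact dist_le_zero.mp (by nlinarith [dist_nonneg (x := x) (y := y)])
  · -- a preimage of `y` is a fixed point of the contraction `z ↦ y + u z`
    have hcontr : ContractingWith c fun z => y + u z :=
      ⟨hc, fun a b => by simpa only [edist_add_left] using hu a b⟩
    exact ⟨_, sub_eq_of_eq_add hcontr.fixedPoint_isFixedPt.symm⟩

theorem lipschitzWith_of_abs_deriv_le {f : ℝ → ℝ} {C : ℝ} (hf : Differentiable ℝ f)
    (hC : ∀ x, |deriv f x| ≤ C) : LipschitzWith C.toNNReal f :=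
  lipschitzWith_of_nnnorm_deriv_le hf fun x => by
    rw [← NNReal.coe_le_coe, coe_nnnorm, Real.norm_eq_abs]
    exact (hC x).trans (Real.le_coe_toNNReal C)

theorem LipschitzWith.sq_le_mul_integral_abs {f : ℝ → ℝ} {K : ℝ≥0} (hf : LipschitzWith K f)
    (hK : 0 < K) (hint : Integrable f) (x : ℝ) : f x ^ 2 ≤ 4 * K * ∫ y, |f y| := by
  -- on `[x, x + r]` with `r = |f x| / (2K)`, `|f|` stays above `|f x| / 2`
  set r := |f x| / (2 * K) with hr_def
  have hK' : (0 : ℝ) < K := hK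
  have hr : 0 ≤ r := by positivity
  have hlow : ∀ y ∈ Set.Icc x (x + r), |f x| / 2 ≤ |f y| := by
    intro y hy
    have hdist : |f x - f y| ≤ K * |x - y| := by
      simpa only [Real.dist_eq] using hf.dist_le_mul x y
    have hxy : |x - y| ≤ r := by
      rw [abs_sub_comm, abs_of_nonneg (by linarith [hy.1])]
      linarith [hy.2]
    have hKr : K * r = |f x| / 2 := by rw [hr_def]; field_simp
    nlinarith [abs_sub_abs_le_abs_sub (f x) (f y), mul_le_mul_of_nonneg_left hxy hK'.le]
  have hset : |f x| / 2 * r ≤ ∫ y in Set.Icc x (x + r), |f y| := by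
    have := setIntegral_ge_of_const_le measurableSet_Icc (by simp [Real.volume_Icc])
      hlow hint.abs.integrableOn
    simpa [Real.volume_Icc, hr, mul_comm] using this
  have hsq : |f x| ^ 2 = 4 * K * (|f x| / 2 * r) := by rw [hr_def]; field_simp; ring
  rw [← sq_abs, hsq]
  gcongr
  exact hset.trans (setIntegral_le_integral hint.abs (.of_forall fun y => abs_nonneg _))

theorem LipschitzWith.exists_abs_le_of_integrable {f : ℝ → ℝ} {K : ℝ≥0} (hf : LipschitzWith K f)
    (hint : Integrable f) : ∃ C, ∀ x, |f x| ≤ C :=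
  ⟨_, fun x => Real.abs_le_sqrt
    ((hf.weaken (le_add_of_nonneg_right zero_le_one)).sq_le_mul_integral_abs
      (add_pos_of_nonneg_of_pos K.2 one_pos) hint x)⟩

theorem MeasureTheory.Integrable.pow_succ_of_abs_le {α : Type*} [MeasurableSpace α]
    {μ : Measure α} {f : α → ℝ} {C : ℝ} (hf : Integrable f μ) (hC : ∀ x, |f x| ≤ C) (n : ℕ) :
    Integrable (fun x => f x ^ (n + 1)) μ := by
  simp_rw [pow_succ]
  exact hf.bdd_mul (hf.aestronglyMeasurable.pow n) (ae_of_all _ fun x => by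
    rw [norm_pow, Real.norm_eq_abs]; exact pow_le_pow_left₀ (abs_nonneg _) (hC x) n)

theorem integral_deriv_mul_sq_eq_zero {f : ℝ → ℝ} (hf : Differentiable ℝ f)
    (h2 : Integrable fun x => deriv f x * f x ^ 2) (h3 : Integrable fun x => f x ^ 3) :
    ∫ x, deriv f x * f x ^ 2 = 0 := by
  refine integral_eq_zero_of_hasDerivAt_of_integrable (f := fun x => f x ^ 3 / 3)
    (fun x => ?_) h2 (h3.div_const 3)
  refine (((hf x).hasDerivAt.fun_pow 3).div_const 3).congr_deriv ?_
  norm_num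
  ring

theorem integral_eq_integral_abs_deriv_smul_comp {F : Type*} [NormedAddCommGroup F]
    [NormedSpace ℝ F] {φ φ' : ℝ → ℝ} (hφ : ∀ x, HasDerivAt φ (φ' x) x)
    (hbij : Function.Bijective φ) (f : ℝ → F) : ∫ y, f y = ∫ x, |φ' x| • f (φ x) := by
  simpa only [Set.image_univ, hbij.surjective.range_eq, setIntegral_univ] using
    integral_image_eq_integral_abs_deriv_smul MeasurableSet.univ
      (fun x _ => (hφ x).hasDerivWithinAt) hbij.injective.injOn f

theorem L2_norm_invariance (ε : ℝ) (g h : ℝ → ℝ)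
    (hg : ContDiff ℝ 1 g) (hint : Integrable g)
    (hsmall : ∀ ξ : ℝ, |ε * deriv g ξ| ≤ 1 / 2)
    (hdef : ∀ ξ : ℝ, h (ξ - ε * g ξ) = g ξ) :
    ∫ x : ℝ, (h x) ^ 2 = ∫ ξ : ℝ, (g ξ) ^ 2 := by
  rcases eq_or_ne ε 0 with rfl | hε
  · simp_all
  have hgd : Differentiable ℝ g := hg.differentiable one_ne_zero
  have hderiv : ∀ ξ, |deriv g ξ| ≤ (2 * |ε|)⁻¹ := fun ξ => by
    rw [← one_div, le_div_iff₀' (by positivity)]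
    linarith [abs_mul ε (deriv g ξ), hsmall ξ]
  obtain ⟨C, hC⟩ := (lipschitzWith_of_abs_deriv_le hgd hderiv).exists_abs_le_of_integrable hint
  have hg2 : Integrable fun ξ => g ξ ^ 2 := hint.pow_succ_of_abs_le hC 1
  have hg'g2 : Integrable fun ξ => deriv g ξ * g ξ ^ 2 :=
    hg2.bdd_mul (aestronglyMeasurable_deriv g _) (ae_of_all _ hderiv)
  have hshift : LipschitzWith (1 / 2 : ℝ).toNNReal fun ξ => ε * g ξ :=
    lipschitzWith_of_abs_deriv_le (hgd.const_mul ε) fun ξ => by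
      simpa [deriv_const_mul _ (hgd ξ)] using hsmall ξ
  have hφ : ∀ ξ, HasDerivAt (fun ξ => ξ - ε * g ξ) (1 - ε * deriv g ξ) ξ := fun ξ =>
    (hasDerivAt_id ξ).sub ((hgd ξ).hasDerivAt.const_mul ε)
  calc ∫ x, h x ^ 2 = ∫ ξ, |1 - ε * deriv g ξ| • h (ξ - ε * g ξ) ^ 2 :=
        integral_eq_integral_abs_deriv_smul_comp hφ (hshift.bijective_id_sub (by norm_num)) _
    _ = ∫ ξ, (g ξ ^ 2 - ε * (deriv g ξ * g ξ ^ 2)) := by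
        congr 1 with ξ
        rw [hdef, smul_eq_mul, abs_of_pos (by linarith [le_abs_self (ε * deriv g ξ), hsmall ξ])]
        ring
    _ = ∫ ξ, g ξ ^ 2 := by
        rw [integral_sub hg2 (hg'g2.const_mul ε), integral_const_mul,
          integral_deriv_mul_sq_eq_zero hgd hg'g2 (hint.pow_succ_of_abs_le hC 2), mul_zero,
          sub_zero]
end

section
/- For every g in the Sobolev space H²(ℝ), ‖g'‖_{L∞} ≤ √(8/3) · ‖g‖_{L²}^{1/4} · ‖g''‖_{L²}^{3/4}. -/
/-!
Write `‖·‖` for the `L²` norm. Since `g'²` and its derivative `2 g' g''` are integrable, `g'²`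
vanishes at `+∞`, so integrating from `x` to `+∞` gives `g'(x)² ≤ 2 ‖g'‖ ‖g''‖`; integrating by
parts, `‖g'‖² = -∫ g g'' ≤ ‖g‖ ‖g''‖`. Hence `g'(x)⁴ ≤ 4 ‖g‖ ‖g''‖³`, which is the claim with the
constant `√2 < √(8/3)`.
-/

open MeasureTheory Filter Set

section CauchySchwarz

variable {α : Type*} [MeasurableSpace α] {μ : Measure α} {f h : α → ℝ}

theorem integrable_mul_of_integrable_sq (hf : AEStronglyMeasurable f μ)
    (hh : AEStronglyMeasurable h μ) (hf2 : Integrable (fun x => f x ^ 2) μ)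
    (hh2 : Integrable (fun x => h x ^ 2) μ) : Integrable (fun x => f x * h x) μ :=
  ((memLp_two_iff_integrable_sq hf).2 hf2).integrable_mul ((memLp_two_iff_integrable_sq hh).2 hh2)

theorem integral_abs_mul_le_L2_mul_L2 (hf : AEStronglyMeasurable f μ)
    (hh : AEStronglyMeasurable h μ) (hf2 : Integrable (fun x => f x ^ 2) μ)
    (hh2 : Integrable (fun x => h x ^ 2) μ) :
    ∫ x, |f x * h x| ∂μ ≤ √(∫ x, f x ^ 2 ∂μ) * √(∫ x, h x ^ 2 ∂μ) := by
  have holder := integral_mul_norm_le_Lp_mul_Lq Real.HolderConjugate.two_two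
    (by simpa using (memLp_two_iff_integrable_sq hf).2 hf2)
    (by simpa using (memLp_two_iff_integrable_sq hh).2 hh2)
  simpa only [Real.norm_eq_abs, abs_mul, Real.rpow_two, sq_abs, Real.sqrt_eq_rpow, one_div]
    using holder

end CauchySchwarz

theorem norm_le_integral_norm_deriv_of_integrable {E : Type*} [NormedAddCommGroup E]
    [NormedSpace ℝ E] [CompleteSpace E] {F F' : ℝ → E}
    (hderiv : ∀ x, HasDerivAt F (F' x) x) (hF' : Integrable F') (hF : Integrable F) (x : ℝ) :
    ‖F x‖ ≤ ∫ t, ‖F' t‖ := by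
  have hlim : Tendsto F atTop (nhds 0) :=
    tendsto_zero_of_hasDerivAt_of_integrableOn_Ioi (fun y _ => hderiv y)
      hF'.integrableOn (hF.integrableOn (s := Ioi x))
  have ftc : ∫ t in Ioi x, F' t = -F x := by
    rw [integral_Ioi_of_hasDerivAt_of_tendsto' (fun y _ => hderiv y) hF'.integrableOn hlim,
      zero_sub]
  calc ‖F x‖ = ‖∫ t in Ioi x, F' t‖ := by rw [ftc, norm_neg]
    _ ≤ ∫ t in Ioi x, ‖F' t‖ := norm_integral_le_integral_norm _
    _ ≤ ∫ t, ‖F' t‖ := setIntegral_le_integral hF'.norm (ae_of_all _ fun _ => norm_nonneg _)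

theorem sq_le_two_mul_L2_mul_L2_deriv {f : ℝ → ℝ} (hf : Differentiable ℝ f)
    (hf2 : Integrable (fun x => f x ^ 2)) (hf'2 : Integrable (fun x => deriv f x ^ 2)) (x : ℝ) :
    f x ^ 2 ≤ 2 * (√(∫ t, f t ^ 2) * √(∫ t, deriv f t ^ 2)) := by
  have hmeas : AEStronglyMeasurable f volume := hf.continuous.aestronglyMeasurable
  have hmeas' : AEStronglyMeasurable (deriv f) volume := aestronglyMeasurable_deriv f volume
  have hderiv : ∀ t, HasDerivAt (fun t => f t ^ 2) (2 * (f t * deriv f t)) t := fun t =>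
    ((hf t).hasDerivAt.pow 2).congr_deriv (by ring)
  have bound := norm_le_integral_norm_deriv_of_integrable hderiv
    ((integrable_mul_of_integrable_sq hmeas hmeas' hf2 hf'2).const_mul 2) hf2 x
  simp only [Real.norm_eq_abs, abs_mul, abs_two, abs_sq, integral_const_mul] at bound
  have cs := integral_abs_mul_le_L2_mul_L2 hmeas hmeas' hf2 hf'2
  simp only [abs_mul] at cs
  linarith

theorem integral_sq_deriv_le_L2_mul_L2_deriv_deriv {g : ℝ → ℝ} (hg : Differentiable ℝ g)
    (hg' : Differentiable ℝ (deriv g)) (hg2 : Integrable (fun x => g x ^ 2))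
    (hg'2 : Integrable (fun x => deriv g x ^ 2))
    (hg''2 : Integrable (fun x => deriv (deriv g) x ^ 2)) :
    ∫ x, deriv g x ^ 2 ≤ √(∫ x, g x ^ 2) * √(∫ x, deriv (deriv g) x ^ 2) := by
  have hmeas : AEStronglyMeasurable g volume := hg.continuous.aestronglyMeasurable
  have hmeas' : AEStronglyMeasurable (deriv g) volume := hg'.continuous.aestronglyMeasurable
  have hmeas'' : AEStronglyMeasurable (deriv (deriv g)) volume :=
    aestronglyMeasurable_deriv _ volume
  have parts : ∫ x, g x * deriv (deriv g) x = -∫ x, deriv g x * deriv g x :=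
    integral_mul_deriv_eq_deriv_mul_of_integrable (fun x _ => (hg x).hasDerivAt)
      (fun x _ => (hg' x).hasDerivAt) (integrable_mul_of_integrable_sq hmeas hmeas'' hg2 hg''2)
      (integrable_mul_of_integrable_sq hmeas' hmeas' hg'2 hg'2)
      (integrable_mul_of_integrable_sq hmeas hmeas' hg2 hg'2)
  calc ∫ x, deriv g x ^ 2 = -∫ x, g x * deriv (deriv g) x := by simp only [parts, sq, neg_neg]
    _ ≤ |∫ x, g x * deriv (deriv g) x| := neg_le_abs _
    _ ≤ ∫ x, |g x * deriv (deriv g) x| := abs_integral_le_integral_abs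
    _ ≤ _ := integral_abs_mul_le_L2_mul_L2 hmeas hmeas'' hg2 hg''2

theorem abs_le_of_sq_le_two_mul_of_sq_le_mul {y a b c : ℝ} (hy : y ^ 2 ≤ 2 * (b * c))
    (hb : b ^ 2 ≤ a * c) (ha : 0 ≤ a) (hc : 0 ≤ c) :
    |y| ≤ √(8 / 3) * a ^ ((1 : ℝ) / 4) * c ^ ((3 : ℝ) / 4) := by
  have hrhs : (√(8 / 3) * a ^ ((1 : ℝ) / 4) * c ^ ((3 : ℝ) / 4)) ^ 4 = 64 / 9 * (a * c ^ 3) := by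
    have e8 : √(8 / 3 : ℝ) ^ 4 = 64 / 9 := by
      rw [show 4 = 2 * 2 by rfl, pow_mul, Real.sq_sqrt (by norm_num)]; norm_num
    rw [mul_pow, mul_pow, e8, ← Real.rpow_natCast, ← Real.rpow_natCast (c ^ _),
      ← Real.rpow_mul ha, ← Real.rpow_mul hc]
    norm_num
    ring
  have hy4 : |y| ^ 4 ≤ 4 * (a * c ^ 3) := by
    have : |y| ^ 4 = (y ^ 2) ^ 2 := by rw [← sq_abs y]; ring
    rw [this]
    nlinarith [sq_nonneg y, mul_le_mul_of_nonneg_right hb (sq_nonneg c)]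
  refine (pow_le_pow_iff_left₀ (abs_nonneg y) (by positivity) (by norm_num : 4 ≠ 0)).1 ?_
  rw [hrhs]
  nlinarith [mul_nonneg ha (pow_nonneg hc 3)]

theorem gagliardo_nirenberg_moser (g : ℝ → ℝ)
    (hg : ContDiff ℝ 2 g)
    (hgL2 : Integrable (fun x => (g x) ^ 2))
    (hg'L2 : Integrable (fun x => (deriv g x) ^ 2))
    (hg''L2 : Integrable (fun x => (deriv (deriv g) x) ^ 2)) :
    ∀ x : ℝ, |deriv g x| ≤
      Real.sqrt (8 / 3) * (Real.sqrt (∫ t : ℝ, (g t) ^ 2)) ^ ((1 : ℝ) / 4) *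
        (Real.sqrt (∫ t : ℝ, (deriv (deriv g) t) ^ 2)) ^ ((3 : ℝ) / 4) := by
  intro x
  have hg1 : Differentiable ℝ g := hg.differentiable (by norm_num)
  have hg2 : Differentiable ℝ (deriv g) := (hg.deriv' (n := 1)).differentiable one_ne_zero
  have hb : √(∫ t, deriv g t ^ 2) ^ 2 ≤ √(∫ t, g t ^ 2) * √(∫ t, deriv (deriv g) t ^ 2) := by
    rw [Real.sq_sqrt (integral_nonneg fun _ => sq_nonneg _)]
    exact integral_sq_deriv_le_L2_mul_L2_deriv_deriv hg1 hg2 hgL2 hg'L2 hg''L2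
  exact abs_le_of_sq_le_two_mul_of_sq_le_mul (sq_le_two_mul_L2_mul_L2_deriv hg2 hg'L2 hg''L2 x) hb
    (Real.sqrt_nonneg _) (Real.sqrt_nonneg _)
end

section
/- Let g : ℝ → ℝ be smooth with g' ∈ L²(ℝ), and suppose ‖ε g'‖_{L∞} ≤ 1/2. Then for every ξ ∈ ℝ, the integral ∫_ℝ (ξ - ξ̃) g'(ξ̃) φ((g(ξ) - g(ξ̃))/(ξ - ξ̃); ε) dξ̃, with φ(c;ε) = -(1/ε²)(log(1-εc) + εc), converges absolutely and is bounded in absolute value by 4 ‖g‖_{L∞} ‖g'‖²_{L²}, uniformly in ξ. -/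
open MeasureTheory Set ENNReal NNReal

open Finset in
private lemma log_taylor_bound' {x : ℝ} (hx : |x| ≤ 1/2) : |Real.log (1-x) + x| ≤ x^2 := by
  have h := Real.abs_log_sub_add_sum_range_le
    (show |x| < 1 by cases abs_nonneg x |>.lt_or_eq <;> linarith) 4
  have hs : (∑ i ∈ range 4, x ^ (i + 1) / (i + 1)) = x + x^2/2 + x^3/3 + x^4/4 := by
    simp [Finset.sum_range_succ]; ring
  rw [hs] at h; norm_num at h
  have h2 : |x|^5 / (1 - |x|) ≤ 2 * |x|^5 := by
    rw [div_le_iff₀ (by linarith)]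
    nlinarith [pow_nonneg (abs_nonneg x) 5]
  have hxx : |x|^2 = x^2 := sq_abs x
  have h3 : |x^2/2 + x^3/3 + x^4/4| ≤ x^2/2 + |x|^3/3 + |x|^4/4 := by
    calc |x^2/2 + x^3/3 + x^4/4| ≤ |x^2/2 + x^3/3| + |x^4/4| := abs_add_le _ _
      _ ≤ |x^2/2| + |x^3/3| + |x^4/4| := by gcongr; exact abs_add_le _ _
      _ = x^2/2 + |x|^3/3 + |x|^4/4 := by
          rw [abs_div, abs_div, abs_div, abs_pow, abs_pow, abs_pow, hxx]; norm_num
  have heq : Real.log (1-x) + x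
      = (x + x^2/2 + x^3/3 + x^4/4 + Real.log (1-x)) - (x^2/2 + x^3/3 + x^4/4) := by ring
  have h4 : |Real.log (1-x) + x| ≤ x^2/2 + |x|^3/3 + |x|^4/4 + 2*|x|^5 := by
    rw [heq]
    calc |_ - _| ≤ |x + x^2/2 + x^3/3 + x^4/4 + Real.log (1-x)| + |x^2/2 + x^3/3 + x^4/4| :=
        abs_sub _ _
      _ ≤ _ := by linarith
  have h5 : |x|^3 ≤ (1/2) * x^2 := by nlinarith [sq_abs x, abs_nonneg x]
  have h6 : |x|^4 ≤ (1/4) * x^2 := by nlinarith [sq_abs x, abs_nonneg x]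
  have h7 : |x|^5 ≤ (1/8) * x^2 := by
    nlinarith [sq_abs x, abs_nonneg x, pow_nonneg (abs_nonneg x) 3]
  nlinarith [sq_nonneg x]

private lemma lintegral_comp_affine' {a : ℝ} (ha : a ≠ 0) (b : ℝ) {h : ℝ → ℝ≥0∞}
    (hm : Measurable h) :
    ∫⁻ t : ℝ, h (a * t + b) = ENNReal.ofReal |a⁻¹| * ∫⁻ u : ℝ, h u := by
  have h1 : Measure.map (fun x : ℝ => a * x) volume = ENNReal.ofReal |a⁻¹| • volume :=
    Real.map_volume_mul_left ha
  have h2 : Measure.map (fun x : ℝ => x + b) volume = volume :=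
    map_add_right_eq_self volume b
  calc ∫⁻ t : ℝ, h (a * t + b)
      = ∫⁻ t : ℝ, (fun u => h (u + b)) (a * t) := rfl
    _ = ∫⁻ u, h (u + b) ∂(Measure.map (fun x : ℝ => a * x) volume) :=
        (lintegral_map (hm.comp (measurable_add_const b)) (measurable_const_mul a)).symm
    _ = ENNReal.ofReal |a⁻¹| * ∫⁻ u, h (u + b) := by rw [h1, lintegral_smul_measure, smul_eq_mul]
    _ = ENNReal.ofReal |a⁻¹| * ∫⁻ u, h u := by
        congr 1
        conv_rhs => rw [← h2, lintegral_map hm (measurable_add_const b)]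

theorem nonlinear_integral_bound (ε : ℝ) (hε : ε ≠ 0) (g : ℝ → ℝ)
    (hg : ContDiff ℝ (⊤ : ℕ∞) g)
    (hg'L2 : Integrable (fun x => (deriv g x) ^ 2))
    (hsmall : ∀ x : ℝ, |ε * deriv g x| ≤ 1 / 2)
    (Mg : ℝ) (hMg : ∀ x : ℝ, |g x| ≤ Mg) :
    ∀ ξ : ℝ,
      Integrable (fun t : ℝ => (ξ - t) * deriv g t *
        (-(1 / ε ^ 2) * (Real.log (1 - ε * ((g ξ - g t) / (ξ - t))) +
          ε * ((g ξ - g t) / (ξ - t))))) ∧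
      |∫ t : ℝ, (ξ - t) * deriv g t *
          (-(1 / ε ^ 2) * (Real.log (1 - ε * ((g ξ - g t) / (ξ - t))) +
            ε * ((g ξ - g t) / (ξ - t))))| ≤
        4 * Mg * ∫ x : ℝ, (deriv g x) ^ 2 := by
  intro ξ
  have hfc : Continuous (deriv g) := hg.continuous_deriv (by simp)
  have hfm : Measurable (deriv g) := hfc.measurable
  have hgc : Continuous g := hg.continuous
  have hgd : Differentiable ℝ g := hg.differentiable (by simp)
  have hMg0 : 0 ≤ Mg := (abs_nonneg _).trans (hMg 0)
  set f : ℝ → ℝ := deriv g with hfdef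
  set c : ℝ → ℝ := fun t => (g ξ - g t) / (ξ - t) with hcdef
  have hcm : Measurable c := (measurable_const.sub hgc.measurable).div
    (measurable_const.sub measurable_id)
  have hK0 : 0 ≤ ∫ x, f x ^ 2 := integral_nonneg fun x => sq_nonneg _
  -- small slope
  have hsmallc : ∀ t, |ε * c t| ≤ 1/2 := by
    intro t
    rcases eq_or_ne t ξ with rfl | hne
    · simp [hcdef]
    · rcases hne.lt_or_gt with hlt | hlt
      · obtain ⟨θ, _, hθ⟩ := exists_deriv_eq_slope g hlt hgc.continuousOn hgd.differentiableOn
        have hct : c t = f θ := by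
          rw [hcdef, hfdef]; dsimp only; rw [hθ]
        rw [hct]; exact hsmall θ
      · obtain ⟨θ, _, hθ⟩ := exists_deriv_eq_slope g hlt hgc.continuousOn hgd.differentiableOn
        have hct : c t = f θ := by
          rw [hcdef, hfdef]; dsimp only; rw [hθ]
          rw [← neg_sub (g ξ) (g t), ← neg_sub ξ t, neg_div_neg_eq]
        rw [hct]; exact hsmall θ
  -- pointwise bound
  have hptwise : ∀ t, |(ξ - t) * f t * (-(1 / ε ^ 2) * (Real.log (1 - ε * c t) + ε * c t))|
      ≤ 2 * Mg * (|f t| * |c t|) := by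
    intro t
    have h1 : |Real.log (1 - ε * c t) + ε * c t| ≤ (ε * c t)^2 := log_taylor_bound' (hsmallc t)
    have h2 : |(-(1 / ε ^ 2) * (Real.log (1 - ε * c t) + ε * c t))| ≤ (c t)^2 := by
      rw [abs_mul]
      have he : |(-(1/ε^2))| = 1/ε^2 := by
        rw [abs_neg, abs_of_nonneg]; positivity
      rw [he]
      have hpos : (0:ℝ) < ε^2 := by positivity
      calc 1/ε^2 * |Real.log (1 - ε * c t) + ε * c t| ≤ 1/ε^2 * (ε * c t)^2 := by
            gcongr
        _ = (c t)^2 := by field_simp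
    have h3 : |(ξ - t) * c t| ≤ 2 * Mg := by
      rcases eq_or_ne t ξ with rfl | hne
      · simp only [sub_self, zero_mul, abs_zero]; linarith
      · have hct : (ξ - t) * c t = g ξ - g t := by
          rw [hcdef]; dsimp only
          rw [mul_div_cancel₀ _ (sub_ne_zero.2 (Ne.symm hne))]
        rw [hct]
        calc |g ξ - g t| ≤ |g ξ| + |g t| := abs_sub _ _
          _ ≤ 2*Mg := by linarith [hMg ξ, hMg t]
    calc |(ξ - t) * f t * (-(1 / ε ^ 2) * (Real.log (1 - ε * c t) + ε * c t))|
        = |ξ - t| * |f t| * |(-(1 / ε ^ 2) * (Real.log (1 - ε * c t) + ε * c t))| := by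
          rw [abs_mul, abs_mul]
      _ ≤ |ξ - t| * |f t| * (c t)^2 := by
          have : (0:ℝ) ≤ |ξ - t| * |f t| := by positivity
          exact mul_le_mul_of_nonneg_left h2 this
      _ = |f t| * (|(ξ - t) * c t| * |c t|) := by
          rw [abs_mul, sq, ← abs_mul_abs_self]; ring
      _ ≤ |f t| * (2 * Mg * |c t|) := by
          have h4 : |(ξ - t) * c t| * |c t| ≤ 2 * Mg * |c t| :=
            mul_le_mul_of_nonneg_right h3 (abs_nonneg _)
          exact mul_le_mul_of_nonneg_left h4 (abs_nonneg _)
      _ = 2 * Mg * (|f t| * |c t|) := by ring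
  -- integral representation of slope
  have hcle : ∀ t, (‖c t‖₊ : ℝ≥0∞) ≤ ∫⁻ s in Ioo (0:ℝ) 1, ‖f ((1-s) * t + s * ξ)‖₊ := by
    intro t
    rcases eq_or_ne t ξ with rfl | hne
    · simp [hcdef]
    · have hξt : ξ - t ≠ 0 := sub_ne_zero.2 (Ne.symm hne)
      have hFTC : ∫ u in t..ξ, f u = g ξ - g t :=
        intervalIntegral.integral_deriv_eq_sub (fun u _ => hgd u) (hfc.intervalIntegrable _ _)
      have hcomp : ∫ s in (0:ℝ)..1, f ((ξ - t) * s + t)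
          = (ξ - t)⁻¹ • ∫ u in ((ξ-t) * 0 + t)..((ξ-t) * 1 + t), f u :=
        intervalIntegral.integral_comp_mul_add f hξt t
      have hct : c t = ∫ s in (0:ℝ)..1, f ((1-s) * t + s * ξ) := by
        have harg : ∀ s : ℝ, (1-s) * t + s * ξ = (ξ - t) * s + t := fun s => by ring
        simp only [harg]
        rw [hcomp]
        norm_num
        rw [hFTC, hcdef]
        dsimp only
        rw [div_eq_inv_mul]
      rw [hct, intervalIntegral.integral_of_le zero_le_one]
      refine le_trans (enorm_integral_le_lintegral_enorm _) (le_of_eq ?_)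
      rw [← Measure.restrict_congr_set Ioo_ae_eq_Ioc]
      rfl
  -- L² quantities
  set A : ℝ≥0∞ := ∫⁻ t : ℝ, (‖f t‖₊ : ℝ≥0∞) ^ (2:ℝ) with hAdef
  have hAf : ∀ x : ℝ, (‖f x‖₊ : ℝ≥0∞) ^ (2:ℝ) = ENNReal.ofReal (f x ^ 2) := by
    intro x
    rw [ENNReal.rpow_two, ← enorm_eq_nnnorm, Real.enorm_eq_ofReal_abs, ← ENNReal.ofReal_pow (abs_nonneg _), sq_abs]
  have hA : A = ENNReal.ofReal (∫ x, f x ^ 2) := by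
    rw [hAdef, ofReal_integral_eq_lintegral_ofReal hg'L2
      (Filter.Eventually.of_forall fun x => sq_nonneg _)]
    exact lintegral_congr hAf
  have hpq : Real.HolderConjugate 2 2 := Real.HolderConjugate.two_two
  -- inner Hölder bound
  have hinner : ∀ s ∈ Ioo (0:ℝ) 1,
      (∫⁻ t : ℝ, (‖f t‖₊ : ℝ≥0∞) * ‖f ((1-s) * t + s * ξ)‖₊)
        ≤ ENNReal.ofReal ((1-s) ^ (-(1/2) : ℝ)) * A := by
    intro s hs
    have ha0 : (0:ℝ) < 1 - s := by linarith [hs.2]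
    have ha1 : (1:ℝ) - s ≠ 0 := ne_of_gt ha0
    have hm2 : Measurable fun t : ℝ => (‖f ((1-s) * t + s * ξ)‖₊ : ℝ≥0∞) :=
      (hfm.comp (by fun_prop)).enorm
    have hholder := ENNReal.lintegral_mul_le_Lp_mul_Lq volume hpq
      (f := fun t : ℝ => (‖f t‖₊ : ℝ≥0∞))
      (g := fun t : ℝ => (‖f ((1-s) * t + s * ξ)‖₊ : ℝ≥0∞))
      hfm.enorm.aemeasurable hm2.aemeasurable
    have hscale : (∫⁻ t : ℝ, (‖f ((1-s) * t + s * ξ)‖₊ : ℝ≥0∞) ^ (2:ℝ))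
        = ENNReal.ofReal (1-s)⁻¹ * A := by
      have := lintegral_comp_affine' ha1 (s * ξ)
        (h := fun u => (‖f u‖₊ : ℝ≥0∞) ^ (2:ℝ)) (hfm.enorm.pow_const _)
      rw [abs_of_pos (inv_pos.2 ha0)] at this
      exact this
    calc (∫⁻ t : ℝ, (‖f t‖₊ : ℝ≥0∞) * ‖f ((1-s) * t + s * ξ)‖₊)
        ≤ (∫⁻ t : ℝ, (‖f t‖₊ : ℝ≥0∞) ^ (2:ℝ)) ^ ((1:ℝ)/2)
          * (∫⁻ t : ℝ, (‖f ((1-s) * t + s * ξ)‖₊ : ℝ≥0∞) ^ (2:ℝ)) ^ ((1:ℝ)/2) := hholder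
      _ = A ^ ((1:ℝ)/2) * (ENNReal.ofReal (1-s)⁻¹ * A) ^ ((1:ℝ)/2) := by
          rw [hscale, hAdef]
      _ = (ENNReal.ofReal (1-s)⁻¹) ^ ((1:ℝ)/2) * (A ^ ((1:ℝ)/2) * A ^ ((1:ℝ)/2)) := by
          rw [ENNReal.mul_rpow_of_nonneg _ _ (by norm_num : (0:ℝ) ≤ 1/2)]; ring
      _ = (ENNReal.ofReal (1-s)⁻¹) ^ ((1:ℝ)/2) * A := by
          rw [← ENNReal.rpow_add_of_nonneg _ _ (by norm_num : (0:ℝ) ≤ 1/2)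
            (by norm_num : (0:ℝ) ≤ 1/2)]
          norm_num
      _ = ENNReal.ofReal ((1-s) ^ (-(1/2) : ℝ)) * A := by
          rw [ENNReal.ofReal_rpow_of_pos (inv_pos.2 ha0), Real.inv_rpow ha0.le,
            ← Real.rpow_neg ha0.le]
  -- the weight integral
  have hE : (∫⁻ s in Ioo (0:ℝ) 1, ENNReal.ofReal ((1-s) ^ (-(1/2):ℝ))) = ENNReal.ofReal 2 := by
    have hii : IntervalIntegrable (fun x : ℝ => x ^ (-(1/2):ℝ)) volume 0 1 :=
      intervalIntegral.intervalIntegrable_rpow' (by norm_num)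
    have hii2 : IntervalIntegrable (fun s : ℝ => (1-s) ^ (-(1/2):ℝ)) volume 0 1 := by
      have h := hii.comp_sub_left 1
      norm_num at h
      exact h.symm
    have hIoo : IntegrableOn (fun s : ℝ => (1-s) ^ (-(1/2):ℝ)) (Ioo 0 1) :=
      ((intervalIntegrable_iff_integrableOn_Ioc_of_le zero_le_one).1 hii2).mono_set
        Ioo_subset_Ioc_self
    rw [← ofReal_integral_eq_lintegral_ofReal hIoo
      ((ae_restrict_iff' measurableSet_Ioo).2 (Filter.Eventually.of_forall
        (fun s hs => Real.rpow_nonneg (by linarith [hs.2]) _)))]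
    congr 1
    rw [← MeasureTheory.integral_Ioc_eq_integral_Ioo,
      ← intervalIntegral.integral_of_le zero_le_one,
      intervalIntegral.integral_comp_sub_left (fun x : ℝ => x ^ (-(1/2):ℝ)) 1]
    norm_num
    rw [integral_rpow (Or.inl (by norm_num))]
    norm_num
  -- the main Fubini estimate
  have hswapmeas : Measurable (Function.uncurry
      fun (t s : ℝ) => (‖f t‖₊ : ℝ≥0∞) * ‖f ((1-s) * t + s * ξ)‖₊) := by
    apply Measurable.mul (f := fun p : ℝ × ℝ => (‖f p.1‖₊ : ℝ≥0∞))
      (g := fun p : ℝ × ℝ => (‖f ((1-p.2) * p.1 + p.2 * ξ)‖₊ : ℝ≥0∞))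
    · exact (hfm.comp measurable_fst).enorm
    · exact (hfm.comp (by fun_prop)).enorm
  have hJ : (∫⁻ t : ℝ, (‖f t‖₊ : ℝ≥0∞) * ‖c t‖₊) ≤ ENNReal.ofReal 2 * A := by
    calc (∫⁻ t : ℝ, (‖f t‖₊ : ℝ≥0∞) * ‖c t‖₊)
        ≤ ∫⁻ t : ℝ, (‖f t‖₊ : ℝ≥0∞) * ∫⁻ s in Ioo (0:ℝ) 1, ‖f ((1-s) * t + s * ξ)‖₊ :=
          lintegral_mono fun t => mul_le_mul_right (hcle t) _
      _ = ∫⁻ t : ℝ, ∫⁻ s in Ioo (0:ℝ) 1, (‖f t‖₊ : ℝ≥0∞) * ‖f ((1-s) * t + s * ξ)‖₊ := by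
          refine lintegral_congr fun t => ?_
          have hX : Measurable fun s : ℝ => (‖f ((1-s) * t + s * ξ)‖₊ : ℝ≥0∞) :=
            (hfm.comp (by fun_prop : Measurable fun s : ℝ => (1-s) * t + s * ξ)).enorm
          exact (lintegral_const_mul _ hX).symm
      _ = ∫⁻ s in Ioo (0:ℝ) 1, ∫⁻ t : ℝ, (‖f t‖₊ : ℝ≥0∞) * ‖f ((1-s) * t + s * ξ)‖₊ :=
          lintegral_lintegral_swap hswapmeas.aemeasurable
      _ ≤ ∫⁻ s in Ioo (0:ℝ) 1, ENNReal.ofReal ((1-s) ^ (-(1/2):ℝ)) * A :=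
          setLIntegral_mono' measurableSet_Ioo hinner
      _ = (∫⁻ s in Ioo (0:ℝ) 1, ENNReal.ofReal ((1-s) ^ (-(1/2):ℝ))) * A :=
          lintegral_mul_const'' _ (by fun_prop)
      _ = ENNReal.ofReal 2 * A := by rw [hE]
  -- measurability of the integrand
  have hintm : Measurable fun t : ℝ =>
      (ξ - t) * f t * (-(1 / ε ^ 2) * (Real.log (1 - ε * c t) + ε * c t)) := by
    apply Measurable.mul
    · exact (measurable_const.sub measurable_id).mul hfm
    · apply Measurable.mul measurable_const
      exact (Real.measurable_log.comp (measurable_const.sub (hcm.const_mul ε))).add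
        (hcm.const_mul ε)
  -- the final lintegral bound
  have hfinal : (∫⁻ t : ℝ, ‖(ξ - t) * f t *
        (-(1 / ε ^ 2) * (Real.log (1 - ε * c t) + ε * c t))‖₊)
      ≤ ENNReal.ofReal (4 * Mg * ∫ x, f x ^ 2) := by
    calc (∫⁻ t : ℝ, ‖(ξ - t) * f t *
          (-(1 / ε ^ 2) * (Real.log (1 - ε * c t) + ε * c t))‖₊)
        ≤ ∫⁻ t : ℝ, ENNReal.ofReal (2 * Mg) * ((‖f t‖₊ : ℝ≥0∞) * ‖c t‖₊) := by
          refine lintegral_mono fun t => ?_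
          rw [← enorm_eq_nnnorm, Real.enorm_eq_ofReal_abs]
          calc ENNReal.ofReal |(ξ - t) * f t *
              (-(1 / ε ^ 2) * (Real.log (1 - ε * c t) + ε * c t))|
              ≤ ENNReal.ofReal (2 * Mg * (|f t| * |c t|)) :=
                ENNReal.ofReal_le_ofReal (hptwise t)
            _ = ENNReal.ofReal (2 * Mg) * ((‖f t‖₊ : ℝ≥0∞) * ‖c t‖₊) := by
                rw [ENNReal.ofReal_mul (by linarith), ENNReal.ofReal_mul (abs_nonneg _),
                  ← enorm_eq_nnnorm, Real.enorm_eq_ofReal_abs, ← enorm_eq_nnnorm, Real.enorm_eq_ofReal_abs]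
      _ = ENNReal.ofReal (2 * Mg) * ∫⁻ t : ℝ, (‖f t‖₊ : ℝ≥0∞) * ‖c t‖₊ :=
          lintegral_const_mul _ (hfm.enorm.mul hcm.enorm)
      _ ≤ ENNReal.ofReal (2 * Mg) * (ENNReal.ofReal 2 * A) := mul_le_mul_right hJ _
      _ = ENNReal.ofReal (4 * Mg * ∫ x, f x ^ 2) := by
          rw [hA, ← ENNReal.ofReal_mul (by norm_num), ← ENNReal.ofReal_mul (by linarith)]
          ring_nf
  have hint : Integrable (fun t : ℝ =>
      (ξ - t) * f t * (-(1 / ε ^ 2) * (Real.log (1 - ε * c t) + ε * c t))) := by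
    refine ⟨hintm.aestronglyMeasurable, ?_⟩
    exact lt_of_le_of_lt hfinal ENNReal.ofReal_lt_top
  refine ⟨hint, ?_⟩
  calc |∫ t : ℝ, (ξ - t) * f t * (-(1 / ε ^ 2) * (Real.log (1 - ε * c t) + ε * c t))|
      ≤ (∫⁻ t : ℝ, ‖(ξ - t) * f t *
          (-(1 / ε ^ 2) * (Real.log (1 - ε * c t) + ε * c t))‖₊).toReal := by
        rw [← Real.norm_eq_abs]
        refine (norm_integral_le_lintegral_norm _).trans (le_of_eq ?_)
        congr 1
        exact lintegral_congr fun t => (ofReal_norm_eq_enorm _)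
    _ ≤ (ENNReal.ofReal (4 * Mg * ∫ x, f x ^ 2)).toReal :=
        ENNReal.toReal_mono ENNReal.ofReal_ne_top hfinal
    _ = 4 * Mg * ∫ x, f x ^ 2 := ENNReal.toReal_ofReal
        (mul_nonneg (mul_nonneg (by norm_num) hMg0) hK0)
end
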